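/- Let Q : (0,∞) → ℝ solve the stationary Adkins–Nappi equation with Q(0)=0, Q(∞)=nπ, and Q' > 0 on (0,∞). Then Φ(r) := r² Q'(r) solves the half-line Schrödinger equation (−∂_r² + 2/r² + V(r) − Ṽ(r)) Φ = 0 on (0,∞), where V(r) = 2(cos 2Q − 1)/r² + (1 − 2cos 2Q + 2Q sin 2Q + cos 4Q)/r⁴ and Ṽ(r) = 2(Q − sin Q cos Q)(1 − cos 2Q)/(r⁵ Q'(r)). -/

import Mathlib

open Real Set

theorem stmt12 (Q : ℝ → ℝ) (n : ℕ)
    (hsmooth : ContDiffOn ℝ (⊤ : ℕ∞) Q (Set.Ioi 0))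
    (h0 : Filter.Tendsto Q (nhdsWithin 0 (Set.Ioi 0)) (nhds 0))
    (hinf : Filter.Tendsto Q Filter.atTop (nhds ((n : ℝ) * Real.pi)))
    (hQ' : ∀ r ∈ Set.Ioi (0:ℝ), 0 < deriv Q r)
    (heq : ∀ r ∈ Set.Ioi (0:ℝ),
      deriv (deriv Q) r + (2/r) * deriv Q r =
        Real.sin (2 * Q r) / r^2 +
          (Q r - Real.sin (Q r) * Real.cos (Q r)) * (1 - Real.cos (2 * Q r)) / r^4) :
    ∀ r ∈ Set.Ioi (0:ℝ),
      -(deriv (deriv (fun s : ℝ => s^2 * deriv Q s)) r) +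
        (2/r^2 +
          (2 * (Real.cos (2 * Q r) - 1) / r^2 +
            (1 - 2 * Real.cos (2 * Q r) + 2 * Q r * Real.sin (2 * Q r) +
              Real.cos (4 * Q r)) / r^4) -
          2 * (Q r - Real.sin (Q r) * Real.cos (Q r)) * (1 - Real.cos (2 * Q r)) /
            (r^5 * deriv Q r)) * (r^2 * deriv Q r) = 0 := by
  have hopen : IsOpen (Set.Ioi (0:ℝ)) := isOpen_Ioi
  have hQ1 : ContDiffOn ℝ (⊤ : ℕ∞) (deriv Q) (Set.Ioi 0) :=
    hsmooth.deriv_of_isOpen hopen (by simp)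
  have hdQ : ∀ s ∈ Set.Ioi (0:ℝ), DifferentiableAt ℝ Q s := fun s hs =>
    (hsmooth.differentiableOn (by simp)).differentiableAt (hopen.mem_nhds hs)
  have hdQ1 : ∀ s ∈ Set.Ioi (0:ℝ), DifferentiableAt ℝ (deriv Q) s := fun s hs =>
    (hQ1.differentiableOn (by simp)).differentiableAt (hopen.mem_nhds hs)
  -- g = first derivative of f
  set g : ℝ → ℝ := fun s =>
    Real.sin (2 * Q s) +
      (Q s - Real.sin (Q s) * Real.cos (Q s)) * (1 - Real.cos (2 * Q s)) / s^2 with hg_def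
  have hderivf : ∀ s ∈ Set.Ioi (0:ℝ),
      deriv (fun x : ℝ => x^2 * deriv Q x) s = g s := by
    intro s hs
    have hs0 : (0:ℝ) < s := hs
    have hf : HasDerivAt (fun x : ℝ => x^2 * deriv Q x)
        (((2:ℕ):ℝ) * s^(2-1) * deriv Q s + s^2 * deriv (deriv Q) s) s :=
      (hasDerivAt_pow 2 s).mul ((hdQ1 s hs).hasDerivAt)
    rw [hf.deriv]
    have h := heq s hs
    have h2 : deriv (deriv Q) s =
        Real.sin (2 * Q s) / s^2 +
          (Q s - Real.sin (Q s) * Real.cos (Q s)) * (1 - Real.cos (2 * Q s)) / s^4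
          - (2/s) * deriv Q s := by linarith
    rw [h2, hg_def]
    field_simp
    ring
  intro r hr
  have hr0 : (0:ℝ) < r := hr
  have hrne : r ≠ 0 := ne_of_gt hr0
  have hq1 : 0 < deriv Q r := hQ' r hr
  -- second derivative of f equals deriv g
  have hev : deriv (fun x : ℝ => x^2 * deriv Q x) =ᶠ[nhds r] g :=
    Filter.eventuallyEq_of_mem (hopen.mem_nhds hr) hderivf
  have hdd : deriv (deriv (fun s : ℝ => s^2 * deriv Q s)) r = deriv g r := hev.deriv_eq
  -- compute deriv g r
  have hQa : HasDerivAt Q (deriv Q r) r := (hdQ r hr).hasDerivAt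
  have h2Q : HasDerivAt (fun x => 2 * Q x) (2 * deriv Q r) r := hQa.const_mul 2
  have hsin2 : HasDerivAt (fun x => Real.sin (2 * Q x))
      (Real.cos (2 * Q r) * (2 * deriv Q r)) r := h2Q.sin
  have hA : HasDerivAt (fun x => Q x - Real.sin (Q x) * Real.cos (Q x))
      (deriv Q r - (Real.cos (Q r) * deriv Q r * Real.cos (Q r) +
        Real.sin (Q r) * (-Real.sin (Q r) * deriv Q r))) r :=
    hQa.sub (hQa.sin.mul hQa.cos)
  have hB : HasDerivAt (fun x => 1 - Real.cos (2 * Q x))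
      (0 - (-Real.sin (2 * Q r) * (2 * deriv Q r))) r :=
    (hasDerivAt_const r (1:ℝ)).sub h2Q.cos
  have hAB := hA.mul hB
  have hpow : HasDerivAt (fun x : ℝ => x^2) (((2:ℕ):ℝ) * r^(2-1)) r := hasDerivAt_pow 2 r
  have hr2ne : r^2 ≠ 0 := pow_ne_zero 2 hrne
  have hdiv := hAB.div hpow hr2ne
  have hg : HasDerivAt g _ r := hsin2.add hdiv
  have hdg := hg.deriv
  rw [hdd, hdg]
  -- trig identities
  have hc2 : Real.cos (2 * Q r) = 2 * Real.cos (Q r)^2 - 1 := Real.cos_two_mul (Q r)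
  have hs2 : Real.sin (2 * Q r) = 2 * Real.sin (Q r) * Real.cos (Q r) := Real.sin_two_mul (Q r)
  have hc4 : Real.cos (4 * Q r) = 2 * Real.cos (2 * Q r)^2 - 1 := by
    have : (4:ℝ) * Q r = 2 * (2 * Q r) := by ring
    rw [this, Real.cos_two_mul]
  rw [hc4, hc2, hs2]
  have hpyth : Real.sin (Q r)^2 = 1 - Real.cos (Q r)^2 := by
    have := Real.sin_sq_add_cos_sq (Q r); linarith
  have hq1ne : deriv Q r ≠ 0 := ne_of_gt hq1
  simp only [Pi.mul_apply]
  field_simp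
  linear_combination (deriv Q r * r^2 * (6*Real.cos (Q r)^2 - 2)) * hpyth - 2 * r * (Q r - Real.cos (Q r) * Real.sin (Q r)) * hc2
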